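/- A Banach space E has the Gelfand–Phillips property if and only if every limited operator T : L → E from a normed space L into E is a compact operator (maps the unit ball to a relatively compact set). -/

import Mathlib

/-!
A limited set `A` is weakly bounded, hence bounded by the uniform boundedness principle. Then
`f ↦ ∑' a, f a • a` is a bounded operator `ℓ¹(A) → E` whose image of the unit ball contains `A`
and lies in the closed absolutely convex hull of `A`, so it is a limited operator; if limited
operators are compact, `A` is therefore relatively compact.
-/

open Filter Topology

/-- A set `A` in a normed space `E` is *limited* if every weak* null sequence in `E'`
converges to `0` uniformly on `A`. -/
def LimitedSetB {E : Type*} [NormedAddCommGroup E] [NormedSpace ℝ E] (A : Set E) : Prop :=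
  ∀ χ : ℕ → E →L[ℝ] ℝ, (∀ x : E, Tendsto (fun n => χ n x) atTop (𝓝 0)) →
    ∀ ε : ℝ, 0 < ε → ∀ᶠ n in atTop, ∀ a ∈ A, |χ n a| ≤ ε

/-- A Banach space is *Gelfand–Phillips* if every limited subset is relatively norm compact. -/
def GelfandPhillipsBanach (E : Type*) [NormedAddCommGroup E] [NormedSpace ℝ E] : Prop :=
  ∀ A : Set E, LimitedSetB A → IsCompact (closure A)

open scoped lp

section WeakBoundedness

variable {𝕜 E : Type*} [RCLike 𝕜] [NormedAddCommGroup E] [NormedSpace 𝕜 E]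

theorem isBounded_of_forall_dual_norm_le {A : Set E}
    (hA : ∀ f : StrongDual 𝕜 E, ∃ C, ∀ a ∈ A, ‖f a‖ ≤ C) : Bornology.IsBounded A := by
  obtain ⟨C, hC⟩ := banach_steinhaus (g := fun a : A ↦ NormedSpace.inclusionInDoubleDual 𝕜 E a)
    fun f ↦ let ⟨C, hC⟩ := hA f; ⟨C, fun a ↦ hC a a.2⟩
  refine isBounded_iff_forall_norm_le.2 ⟨C, fun a ha ↦ ?_⟩
  rw [← (NormedSpace.inclusionInDoubleDualLi 𝕜).norm_map a]
  exact hC ⟨a, ha⟩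

end WeakBoundedness

namespace lp

variable {𝕜 ι F : Type*} [NormedField 𝕜] [NormedAddCommGroup F] [NormedSpace 𝕜 F]

theorem summable_norm_of_one (f : ℓ¹(ι, 𝕜)) : Summable fun i ↦ ‖f i‖ := by
  simpa using (lp.memℓp f).summable (by norm_num)

theorem norm_eq_tsum_norm_of_one (f : ℓ¹(ι, 𝕜)) : ‖f‖ = ∑' i, ‖f i‖ := by
  simpa using norm_eq_tsum_rpow (by norm_num) f

variable {v : ι → F} {C : ℝ}

theorem summable_norm_smul_of_norm_le (hv : ∀ i, ‖v i‖ ≤ C) (f : ℓ¹(ι, 𝕜)) :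
    Summable fun i ↦ ‖f i • v i‖ :=
  ((summable_norm_of_one f).mul_right C).of_nonneg_of_le (fun _ ↦ norm_nonneg _) fun i ↦ by
    rw [norm_smul]; gcongr; exact hv i

theorem norm_tsum_smul_le (hv : ∀ i, ‖v i‖ ≤ C) (f : ℓ¹(ι, 𝕜)) :
    ‖∑' i, f i • v i‖ ≤ C * ‖f‖ :=
  calc ‖∑' i, f i • v i‖ ≤ ∑' i, ‖f i • v i‖ :=
        norm_tsum_le_tsum_norm (summable_norm_smul_of_norm_le hv f)
    _ ≤ ∑' i, ‖f i‖ * C :=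
        (summable_norm_smul_of_norm_le hv f).tsum_le_tsum
          (fun i ↦ by rw [norm_smul]; gcongr; exact hv i) ((summable_norm_of_one f).mul_right C)
    _ = C * ‖f‖ := by rw [tsum_mul_right, norm_eq_tsum_norm_of_one, mul_comm]

variable [CompleteSpace F]

theorem summable_smul_of_norm_le (hv : ∀ i, ‖v i‖ ≤ C) (f : ℓ¹(ι, 𝕜)) :
    Summable fun i ↦ f i • v i :=
  (summable_norm_smul_of_norm_le hv f).of_norm

variable (𝕜) in
noncomputable def synthesis (hv : ∀ i, ‖v i‖ ≤ C) : ℓ¹(ι, 𝕜) →L[𝕜] F :=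
  LinearMap.mkContinuous
    { toFun f := ∑' i, f i • v i
      map_add' f g := by
        simp only [coeFn_add, Pi.add_apply, add_smul]
        exact (summable_smul_of_norm_le hv f).tsum_add (summable_smul_of_norm_le hv g)
      map_smul' c f := by
        simp only [coeFn_smul, Pi.smul_apply, smul_eq_mul, mul_smul, RingHom.id_apply]
        exact (summable_smul_of_norm_le hv f).tsum_const_smul c }
    C (norm_tsum_smul_le hv)

theorem synthesis_apply (hv : ∀ i, ‖v i‖ ≤ C) (f : ℓ¹(ι, 𝕜)) :
    synthesis 𝕜 hv f = ∑' i, f i • v i :=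
  rfl

theorem synthesis_single [DecidableEq ι] (hv : ∀ i, ‖v i‖ ≤ C) (i : ι) :
    synthesis 𝕜 hv (lp.single 1 i (1 : 𝕜)) = v i := by
  rw [synthesis_apply, tsum_eq_single i fun j hj ↦ by rw [lp.single_apply_ne 1 i _ hj, zero_smul],
    lp.single_apply_self, one_smul]

variable (𝕜) in
theorem range_subset_image_closedBall_synthesis (hv : ∀ i, ‖v i‖ ≤ C) :
    Set.range v ⊆ synthesis 𝕜 hv '' Metric.closedBall 0 1 := by
  classical
  rintro _ ⟨i, rfl⟩
  refine ⟨lp.single 1 i 1, ?_, synthesis_single hv i⟩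
  rw [mem_closedBall_zero_iff, lp.norm_single (by norm_num), norm_one]

theorem norm_apply_synthesis_le (hv : ∀ i, ‖v i‖ ≤ C) {φ : StrongDual 𝕜 F} {ε : ℝ}
    (hφ : ∀ i, ‖φ (v i)‖ ≤ ε) (f : ℓ¹(ι, 𝕜)) : ‖φ (synthesis 𝕜 hv f)‖ ≤ ε * ‖f‖ := by
  rw [synthesis_apply, φ.map_tsum (summable_smul_of_norm_le hv f)]
  simpa only [map_smul] using norm_tsum_smul_le hφ f

end lp

section Limited

variable {E : Type*} [NormedAddCommGroup E] [NormedSpace ℝ E]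

theorem LimitedSetB.exists_abs_le {A : Set E} (hA : LimitedSetB A) (f : StrongDual ℝ E) :
    ∃ C, ∀ a ∈ A, |f a| ≤ C := by
  have hχ (x : E) : Tendsto (fun n : ℕ ↦ ((1 / ((n : ℝ) + 1)) • f) x) atTop (𝓝 0) := by
    simpa using tendsto_one_div_add_atTop_nhds_zero_nat.mul_const (f x)
  obtain ⟨n, hn⟩ := (hA _ hχ 1 one_pos).exists
  refine ⟨n + 1, fun a ha ↦ ?_⟩
  have h := hn a ha
  rwa [smul_apply, smul_eq_mul, abs_mul, abs_of_pos (by positivity),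
    div_mul_eq_mul_div, one_mul, div_le_one (by positivity)] at h

theorem LimitedSetB.isBounded {A : Set E} (hA : LimitedSetB A) : Bornology.IsBounded A :=
  isBounded_of_forall_dual_norm_le (𝕜 := ℝ) fun f ↦ by simpa using hA.exists_abs_le f

theorem LimitedSetB.image_closedBall_synthesis [CompleteSpace E] {ι : Type*} {v : ι → E} {C : ℝ}
    (hv : ∀ i, ‖v i‖ ≤ C) (hlim : LimitedSetB (Set.range v)) :
    LimitedSetB (lp.synthesis ℝ hv '' Metric.closedBall 0 1) := by
  intro χ hχ ε hε
  filter_upwards [hlim χ hχ ε hε] with n hn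
  rintro _ ⟨f, hf, rfl⟩
  rw [mem_closedBall_zero_iff] at hf
  have := lp.norm_apply_synthesis_le hv (φ := χ n) (fun i ↦ hn _ ⟨i, rfl⟩) f
  exact this.trans (mul_le_of_le_one_right hε.le hf)

end Limited

/-- A Banach space `E` is Gelfand–Phillips iff every limited operator `T : L → E` from a
normed space `L` (i.e. one mapping the closed unit ball of `L` to a limited set) is compact
(maps the closed unit ball to a relatively compact set). -/
theorem stmt18 {E : Type u} [NormedAddCommGroup E] [NormedSpace ℝ E] [CompleteSpace E] :
    GelfandPhillipsBanach E ↔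
      ∀ (L : Type u) (_ : NormedAddCommGroup L), ∀ (_ : NormedSpace ℝ L),
        ∀ T : L →L[ℝ] E, LimitedSetB (T '' Metric.closedBall 0 1) →
          IsCompact (closure (T '' Metric.closedBall 0 1)) := by
  refine ⟨fun hGP L _ _ T hT ↦ hGP _ hT, fun h A hA ↦ ?_⟩
  obtain ⟨C, hC⟩ := isBounded_iff_forall_norm_le.1 hA.isBounded
  have hv : ∀ a : A, ‖(a : E)‖ ≤ C := fun a ↦ hC a a.2
  have hrange : Set.range ((↑) : A → E) = A := Subtype.range_coe
  have hT := h _ _ _ (lp.synthesis ℝ hv)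
    (LimitedSetB.image_closedBall_synthesis hv (by rwa [hrange]))
  exact hT.of_isClosed_subset isClosed_closure
    (closure_mono (by simpa [hrange] using lp.range_subset_image_closedBall_synthesis ℝ hv))
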